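/- The poset F_7, consisting of a chain c_0 < c_1 < c_2 < ... together with pairwise incomparable elements a_1, a_2, a_3, ..., where a_j < c_i iff i ≥ j and there are no other comparabilities, is not reversible: there exists an order-preserving bijection from F_7 to itself whose inverse is not order-preserving. -/
import Mathlib


/-- `F₇`: a chain `c₀ < c₁ < ⋯` (encoded `Sum.inr i = cᵢ`) together with pairwise
incomparable elements `a₁, a₂, …` (encoded `Sum.inl j = a_{j+1}`), where
`a_j < c_i` iff `i ≥ j`, and no other comparabilities. -/
def F7 : Type := ℕ ⊕ ℕ

/-- The order relation of `F₇`: `a_{j+1} ≤ cᵢ` iff `i ≥ j + 1`. -/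
def F7.le : F7 → F7 → Prop
  | Sum.inl j, Sum.inl j' => j = j'
  | Sum.inl j, Sum.inr i => j + 1 ≤ i
  | Sum.inr _, Sum.inl _ => False
  | Sum.inr i, Sum.inr i' => i ≤ i'

theorem F7.le_refl (x : F7) : F7.le x x := by cases x <;> simp [F7.le]
theorem F7.le_trans (x y z : F7) : F7.le x y → F7.le y z → F7.le x z := by
  cases x <;> cases y <;> cases z <;> simp [F7.le] <;> omega
theorem F7.le_antisymm (x y : F7) : F7.le x y → F7.le y x → x = y := by
  cases x <;> cases y <;> simp [F7.le] <;> intro h h' <;> exact congrArg _ (by omega)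

instance : PartialOrder F7 where
  le := F7.le
  le_refl := F7.le_refl
  le_trans := F7.le_trans
  le_antisymm := F7.le_antisymm

def F7.g : F7 → F7
  | Sum.inl 0 => Sum.inr 0
  | Sum.inl (j+1) => Sum.inl j
  | Sum.inr i => Sum.inr (i+1)

def F7.ginv : F7 → F7
  | Sum.inl j => Sum.inl (j+1)
  | Sum.inr 0 => Sum.inl 0
  | Sum.inr (i+1) => Sum.inr i

def F7.e : F7 ≃ F7 where
  toFun := F7.g
  invFun := F7.ginv
  left_inv := by
    intro x
    rcases x with (_ | j) | i <;> rfl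
  right_inv := by
    intro x
    rcases x with j | (_ | i) <;> rfl

/-- The poset `F7` is not reversible. -/
theorem F7_not_reversible : ∃ f : F7 ≃ F7, Monotone f ∧ ¬ Monotone f.symm := by
  refine ⟨F7.e, ?_, ?_⟩
  · intro x y h
    show F7.le (F7.g x) (F7.g y)
    have h' : F7.le x y := h
    rcases x with (_ | j) | i <;> rcases y with (_ | j') | i' <;>
      simp_all [F7.le, F7.g] <;> omega
  · intro h
    have h01 : @LE.le F7 Preorder.toLE (Sum.inr 0) (Sum.inr 1) := by
      show F7.le _ _; simp [F7.le]
    have := h h01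
    have : F7.le (F7.ginv (Sum.inr 0)) (F7.ginv (Sum.inr 1)) := this
    simp [F7.ginv, F7.le] at this
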